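/- arXiv:math-ph/0310027 — 4 statements merged into one kernel-verified Lean document; each statement's English description precedes it below -/
import Mathlib

section
/- One-variable central limit bound: for v ∈ ℓ²₃(L) and J ∈ (1/2)ℕ₀, the fluctuation operator F_J(v) = √(2/J) Σ_x [v_x·S_x − ω(v_x·S_x)] satisfies |ω(e^{iF_J(v)}) − e^{−(1/2)|ṽ|₂²}| ≤ J^{−1/2} exp(√2 |v|₂ + √2 exp(√2 |v|₂)), where ṽ_x is the orthogonal projection of v_x onto the plane perpendicular to u_x. -/
/-!
Restricted to finitely many sites, the coherent-state generating function turns `ω(e^{iF_J(v)})`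
into a product over sites of `f(c_x, t_x)^{2J}`, where `t_x = |v_x|/√(2J)`, `c_x` is the cosine
of the angle between `v_x` and `u_x`, and `f(c, t) = e^{-ict}(cos t + ic sin t)`. This `f(c, ·)` is
the characteristic function of a centred two-point law of variance `1 - c²`, so
`|f(c, t) - e^{-(1-c²)t²/2}| ≤ 2t³`. Since all factors have modulus at most one, the errors of
powers and products add up, giving `Σ_x 2·2J·t_x³ = √(2/J) Σ_x |v_x|³ ≤ √(2/J) |v|₂³`; the bound
passes to the infinite volume by continuity, and `√2 V³ ≤ exp(√2V + √2 exp(√2V))`.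
-/

open scoped ComplexOrder

/-- Euclidean norm on `ℝ³`. -/
noncomputable def norm3 (a : Fin 3 → ℝ) : ℝ := Real.sqrt (∑ i, a i ^ 2)

/-- Euclidean inner product on `ℝ³`. -/
def dot3 (a b : Fin 3 → ℝ) : ℝ := ∑ i, a i * b i

/-- Projection of `v` onto the plane orthogonal to the unit vector `u`. -/
def tilde3 (u v : Fin 3 → ℝ) : Fin 3 → ℝ := v - dot3 v u • u

variable {L : Type*} {H : Type*} [NormedAddCommGroup H] [InnerProductSpace ℂ H]
  [CompleteSpace H]

/-- The operator `v·S = v¹S¹ + v²S² + v³S³`. -/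
noncomputable def sdotC (a : Fin 3 → ℝ) (S : Fin 3 → H →L[ℂ] H) : H →L[ℂ] H :=
  ∑ i, (a i : ℂ) • S i

/-- The spin fluctuation operator `F_J(v) = √(2/J) Σ_x [v_x·S_x − ω(v_x·S_x)]`,
where `ω(v_x·S_x) = J v_x·u_x` in the product coherent state with directions `u_x`. -/
noncomputable def flucOp (J : ℝ) (S : L → Fin 3 → H →L[ℂ] H) (u v : L → Fin 3 → ℝ) :
    H →L[ℂ] H :=
  (Real.sqrt (2 / J) : ℂ) •
    ∑' x, (sdotC (v x) (S x) - ((J * dot3 (v x) (u x) : ℝ) : ℂ) • (1 : H →L[ℂ] H))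

open Filter Topology

theorem Finset.norm_prod_sub_prod_le {ι R : Type*} [NormedCommRing R] [NormOneClass R]
    (s : Finset ι) {f g : ι → R} (hf : ∀ i ∈ s, ‖f i‖ ≤ 1) (hg : ∀ i ∈ s, ‖g i‖ ≤ 1) :
    ‖∏ i ∈ s, f i - ∏ i ∈ s, g i‖ ≤ ∑ i ∈ s, ‖f i - g i‖ := by
  classical
  induction s using Finset.induction_on with
  | empty => simp
  | insert a s ha ih =>
    simp only [Finset.forall_mem_insert] at hf hg
    rw [Finset.prod_insert ha, Finset.prod_insert ha, Finset.sum_insert ha,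
      show f a * ∏ i ∈ s, f i - g a * ∏ i ∈ s, g i
        = (f a - g a) * ∏ i ∈ s, g i + f a * (∏ i ∈ s, f i - ∏ i ∈ s, g i) by ring]
    have hgs : ‖∏ i ∈ s, g i‖ ≤ 1 :=
      (Finset.norm_prod_le _ _).trans (Finset.prod_le_one (fun _ _ ↦ norm_nonneg _) hg.2)
    calc _ ≤ ‖f a - g a‖ * ‖∏ i ∈ s, g i‖ + ‖f a‖ * ‖∏ i ∈ s, f i - ∏ i ∈ s, g i‖ :=
          (norm_add_le _ _).trans (add_le_add (norm_mul_le _ _) (norm_mul_le _ _))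
      _ ≤ ‖f a - g a‖ * 1 + 1 * ∑ i ∈ s, ‖f i - g i‖ :=
          add_le_add (mul_le_mul_of_nonneg_left hgs (norm_nonneg _))
            (mul_le_mul hf.1 (ih hf.2 hg.2) (norm_nonneg _) zero_le_one)
      _ = _ := by ring

theorem norm_pow_sub_pow_le {R : Type*} [NormedCommRing R] [NormOneClass R] {a b : R}
    (ha : ‖a‖ ≤ 1) (hb : ‖b‖ ≤ 1) (n : ℕ) : ‖a ^ n - b ^ n‖ ≤ n * ‖a - b‖ := by
  simpa using Finset.norm_prod_sub_prod_le (Finset.range n) (f := fun _ ↦ a) (g := fun _ ↦ b)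
    (fun _ _ ↦ ha) (fun _ _ ↦ hb)

theorem sum_pow_three_le_sqrt_tsum_sq_pow_three {ι : Type*} {a : ι → ℝ}
    (hsum : Summable fun i ↦ a i ^ 2) (s : Finset ι) :
    ∑ i ∈ s, a i ^ 3 ≤ √(∑' i, a i ^ 2) ^ 3 := by
  set V := √(∑' i, a i ^ 2)
  have hV : V ^ 2 = ∑' i, a i ^ 2 := Real.sq_sqrt (tsum_nonneg fun _ ↦ sq_nonneg _)
  have hle : ∀ i, a i ≤ V := fun i ↦ Real.le_sqrt_of_sq_le (hsum.le_tsum i fun _ _ ↦ sq_nonneg _)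
  calc ∑ i ∈ s, a i ^ 3 ≤ ∑ i ∈ s, V * a i ^ 2 :=
        Finset.sum_le_sum fun i _ ↦ by
          rw [pow_succ']; exact mul_le_mul_of_nonneg_right (hle i) (sq_nonneg _)
    _ = V * ∑ i ∈ s, a i ^ 2 := Finset.mul_sum _ _ _ |>.symm
    _ ≤ V * V ^ 2 := by
        rw [hV]; gcongr
        exact hsum.sum_le_tsum s fun _ _ ↦ sq_nonneg _
    _ = V ^ 3 := by ring

theorem sqrt_two_mul_pow_three_le_exp {V : ℝ} (hV : 0 ≤ V) :
    √2 * V ^ 3 ≤ Real.exp (√2 * V + √2 * Real.exp (√2 * V)) := by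
  have h2 : √2 ^ 2 = 2 := Real.sq_sqrt (by norm_num)
  have h1 : 1 ≤ √2 := by rw [Real.one_le_sqrt]; norm_num
  set W := √2 * V
  have hW : 0 ≤ W := by positivity
  -- `W³/6 ≤ exp W` and `3 ≤ 1 + √2 + 1 ≤ exp √2 ≤ exp (√2 exp W)`
  have hcube : W ^ 3 / 6 ≤ Real.exp W := by
    have := Real.sum_le_exp_of_nonneg hW 4
    simp only [Finset.sum_range_succ, Finset.sum_range_zero] at this
    norm_num [Nat.factorial] at this
    nlinarith [sq_nonneg W]
  have hthree : 3 ≤ Real.exp (√2 * Real.exp W) := by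
    have := Real.quadratic_le_exp_of_nonneg (show 0 ≤ √2 by positivity)
    refine le_trans (by nlinarith) (this.trans (Real.exp_le_exp.mpr ?_))
    nlinarith [Real.add_one_le_exp W]
  rw [Real.exp_add]
  have hW3 : W ^ 3 = 2 * √2 * V ^ 3 := by simp only [W]; rw [mul_pow, pow_succ, h2]
  nlinarith [mul_le_mul hcube hthree (by norm_num) (Real.exp_nonneg _), pow_nonneg hV 3]

theorem Complex.norm_exp_I_mul_sub_quadratic_le {x : ℝ} (hx : |x| ≤ 2) :
    ‖exp (I * x) - (1 + I * x - x ^ 2 / 2)‖ ≤ |x| ^ 3 / 3 := by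
  have h := exp_bound' (x := I * x) (n := 3) (by
    rw [norm_mul, norm_I, one_mul, norm_real, Real.norm_eq_abs]; norm_num; linarith)
  have hsum : ∑ m ∈ Finset.range 3, (I * x) ^ m / m.factorial = 1 + I * x - x ^ 2 / 2 := by
    simp [Finset.sum_range_succ, mul_pow]; ring
  rw [hsum, norm_mul, norm_I, one_mul, norm_real, Real.norm_eq_abs] at h
  refine h.trans_eq ?_
  norm_num [Nat.factorial]
  ring

theorem norm_ofReal_exp_neg_le_one {s : ℝ} (hs : 0 ≤ s) : ‖(Real.exp (-s) : ℂ)‖ ≤ 1 := by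
  rw [Complex.norm_real, Real.norm_of_nonneg (Real.exp_nonneg _), Real.exp_le_one_iff]
  linarith

/-- One site's factor of the coherent-state generating function, centred by its mean phase;
`c` is the cosine of the angle between the field and the spin direction. -/
noncomputable def coherentFactor (c t : ℝ) : ℂ :=
  Complex.exp (-(Complex.I * c * t)) * (Real.cos t + Complex.I * c * Real.sin t)

namespace coherentFactor

open Complex

theorem eq_two_point (c t : ℝ) :
    coherentFactor c t = (1 + c) / 2 * exp (I * ((1 - c) * t : ℝ))
      + (1 - c) / 2 * exp (I * (-((1 + c) * t) : ℝ)) := by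
  have hplus : exp (I * ((1 - c) * t : ℝ)) = exp (-(I * c * t)) * (cos t + sin t * I) := by
    rw [cos_add_sin_I, ← exp_add]; congr 1; push_cast; ring
  have hminus : exp (I * (-((1 + c) * t) : ℝ)) = exp (-(I * c * t)) * (cos t - sin t * I) := by
    rw [show cos t - sin t * I = exp (-t * I) by rw [← cos_add_sin_I, cos_neg, sin_neg]; ring,
      ← exp_add]
    congr 1; push_cast; ring
  rw [coherentFactor, hplus, hminus]
  push_cast
  ring

theorem norm_le_one {c : ℝ} (hc : |c| ≤ 1) (t : ℝ) : ‖coherentFactor c t‖ ≤ 1 := by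
  obtain ⟨hc₁, hc₂⟩ := abs_le.mp hc
  rw [eq_two_point]
  refine (norm_add_le _ _).trans_eq ?_
  simp only [norm_mul, norm_exp_I_mul_ofReal, mul_one, norm_div, Complex.norm_two]
  norm_cast
  rw [Real.norm_of_nonneg (by linarith), Real.norm_of_nonneg (by linarith)]
  ring

theorem norm_sub_quadratic_le {c t : ℝ} (hc : |c| ≤ 1) (ht₀ : 0 ≤ t) (ht₁ : t ≤ 1) :
    ‖coherentFactor c t - (1 - (1 - c ^ 2) * t ^ 2 / 2 : ℝ)‖ ≤ t ^ 3 / 3 := by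
  obtain ⟨hc₁, hc₂⟩ := abs_le.mp hc
  set p := (1 + c) / 2
  set q := (1 - c) / 2
  set a := (1 - c) * t
  set b := -((1 + c) * t)
  have hp : 0 ≤ p := by simp only [p]; linarith
  have hq : 0 ≤ q := by simp only [q]; linarith
  have ha : |a| ≤ 2 := by rw [abs_le]; constructor <;> nlinarith
  have hb : |b| ≤ 2 := by rw [abs_le]; constructor <;> nlinarith
  -- the two-point law with weights `p, q` at `a, b` is centred with variance `(1 - c²) t²`
  have hsplit : coherentFactor c t - (1 - (1 - c ^ 2) * t ^ 2 / 2 : ℝ)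
      = p * (exp (I * a) - (1 + I * a - a ^ 2 / 2))
        + q * (exp (I * b) - (1 + I * b - b ^ 2 / 2)) := by
    rw [eq_two_point]; simp only [p, q, a, b]; push_cast; ring
  have hthird : p * (|a| ^ 3 / 3) + q * (|b| ^ 3 / 3) ≤ t ^ 3 / 3 := by
    rw [abs_of_nonneg (by nlinarith), abs_of_nonpos (by nlinarith)]
    simp only [p, q, a, b]
    nlinarith [pow_nonneg ht₀ 3, mul_nonneg (pow_nonneg ht₀ 3) (pow_nonneg (sq_nonneg c) 2)]
  rw [hsplit]
  refine (norm_add_le _ _).trans (le_trans ?_ hthird)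
  simp only [norm_mul, norm_real, Real.norm_of_nonneg hp, Real.norm_of_nonneg hq]
  gcongr
  · exact norm_exp_I_mul_sub_quadratic_le ha
  · exact norm_exp_I_mul_sub_quadratic_le hb

theorem norm_sub_gaussian_le {c t : ℝ} (hc : |c| ≤ 1) (ht : 0 ≤ t) :
    ‖coherentFactor c t - Real.exp (-((1 - c ^ 2) * t ^ 2 / 2))‖ ≤ 2 * t ^ 3 := by
  have hc2 : c ^ 2 ≤ 1 := by rw [← sq_abs]; nlinarith [abs_nonneg c]
  have hgauss : ‖(Real.exp (-((1 - c ^ 2) * t ^ 2 / 2)) : ℂ)‖ ≤ 1 :=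
    norm_ofReal_exp_neg_le_one (by nlinarith [sq_nonneg t])
  rcases le_or_gt t 1 with ht₁ | ht₁
  · set s := (1 - c ^ 2) * t ^ 2 / 2
    have hs₀ : 0 ≤ s := by positivity
    have hs : s ≤ t ^ 2 / 2 := by simp only [s]; nlinarith [sq_nonneg t]
    have hexp : |Real.exp (-s) - (1 - s)| ≤ s ^ 2 := by
      have := Real.abs_exp_sub_one_sub_id_le (x := -s)
        (by rw [abs_neg, abs_of_nonneg hs₀]; nlinarith)
      rwa [neg_sq, show Real.exp (-s) - 1 - -s = Real.exp (-s) - (1 - s) by ring] at this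
    calc ‖coherentFactor c t - Real.exp (-s)‖
        ≤ ‖coherentFactor c t - (1 - s : ℝ)‖ + ‖((1 - s : ℝ) : ℂ) - Real.exp (-s)‖ :=
          norm_sub_le_norm_sub_add_norm_sub _ _ _
      _ ≤ t ^ 3 / 3 + s ^ 2 := by
          gcongr
          · exact norm_sub_quadratic_le hc ht ht₁
          · rw [← ofReal_sub, norm_real, Real.norm_eq_abs, abs_sub_comm]; exact hexp
      _ ≤ 2 * t ^ 3 := by nlinarith [pow_le_pow_of_le_one ht ht₁ (show 3 ≤ 4 by norm_num)]
  · calc ‖coherentFactor c t - Real.exp (-((1 - c ^ 2) * t ^ 2 / 2))‖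
        ≤ 1 + 1 := (norm_sub_le _ _).trans (add_le_add (norm_le_one hc t) hgauss)
      _ ≤ 2 * t ^ 3 := by nlinarith [one_le_pow₀ ht₁.le (n := 3)]

theorem pow_eq (c t : ℝ) (m : ℕ) :
    coherentFactor c t ^ m
      = exp (-(I * (m * c * t : ℝ)))
        * ((Real.cos t : ℂ) + I * c * Real.sin t) ^ m := by
  rw [coherentFactor, mul_pow, ← exp_nat_mul]; push_cast; ring_nf

end coherentFactor

theorem norm3_eq_norm (a : Fin 3 → ℝ) : norm3 a = ‖WithLp.toLp 2 a‖ := by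
  simp [norm3, EuclideanSpace.norm_eq]

theorem dot3_eq_inner (a b : Fin 3 → ℝ) :
    dot3 a b = inner ℝ (WithLp.toLp 2 a) (WithLp.toLp 2 b) := by
  simp [dot3, PiLp.inner_apply, mul_comm]

theorem norm3_nonneg (a : Fin 3 → ℝ) : 0 ≤ norm3 a := Real.sqrt_nonneg _

theorem norm3_zero : norm3 0 = 0 := by simp [norm3]

theorem norm3_smul (r : ℝ) (a : Fin 3 → ℝ) : norm3 (r • a) = |r| * norm3 a := by
  simp [norm3_eq_norm, WithLp.toLp_smul, norm_smul]

theorem dot3_smul_left (r : ℝ) (a b : Fin 3 → ℝ) : dot3 (r • a) b = r * dot3 a b := by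
  simp [dot3_eq_inner, WithLp.toLp_smul, inner_smul_left]

theorem norm3_eq_zero {a : Fin 3 → ℝ} : norm3 a = 0 ↔ a = 0 := by
  simp [norm3_eq_norm]

theorem abs_dot3_le (a b : Fin 3 → ℝ) : |dot3 a b| ≤ norm3 a * norm3 b := by
  rw [dot3_eq_inner, norm3_eq_norm, norm3_eq_norm]; exact abs_real_inner_le_norm _ _

theorem norm3_sq (a : Fin 3 → ℝ) : norm3 a ^ 2 = ∑ i, a i ^ 2 :=
  Real.sq_sqrt (by positivity)

theorem norm3_tilde3_sq {u : Fin 3 → ℝ} (hu : norm3 u = 1) (v : Fin 3 → ℝ) :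
    norm3 (tilde3 u v) ^ 2 = norm3 v ^ 2 - dot3 v u ^ 2 := by
  have hu2 := norm3_sq u
  rw [hu, one_pow] at hu2
  rw [norm3_sq, norm3_sq]
  simp only [tilde3, dot3, Pi.sub_apply, Pi.smul_apply, smul_eq_mul, Fin.sum_univ_three] at hu2 ⊢
  linear_combination (v 0 * u 0 + v 1 * u 1 + v 2 * u 2) ^ 2 * hu2.symm

/-- Equal to `0` when `w = 0`, since `x / 0 = 0`. -/
noncomputable def cosAngle (u w : Fin 3 → ℝ) : ℝ := dot3 w u / norm3 w

theorem cosAngle_mul_norm3 (u w : Fin 3 → ℝ) : cosAngle u w * norm3 w = dot3 w u := by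
  rcases eq_or_ne (norm3 w) 0 with hw | hw
  · rw [hw, mul_zero, norm3_eq_zero.mp hw, dot3_eq_inner]; simp
  · exact div_mul_cancel₀ _ hw

theorem abs_cosAngle_le_one {u : Fin 3 → ℝ} (hu : norm3 u = 1) (w : Fin 3 → ℝ) :
    |cosAngle u w| ≤ 1 := by
  rw [cosAngle, abs_div, abs_of_nonneg (norm3_nonneg w)]
  refine div_le_one_of_le₀ ?_ (norm3_nonneg w)
  simpa [hu] using abs_dot3_le w u

theorem cosAngle_smul (u : Fin 3 → ℝ) {r : ℝ} (hr : 0 < r) (w : Fin 3 → ℝ) :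
    cosAngle u (r • w) = cosAngle u w := by
  rw [cosAngle, cosAngle, dot3_smul_left, norm3_smul, abs_of_pos hr, mul_div_mul_left _ _ hr.ne']

theorem one_sub_cosAngle_sq_mul {u : Fin 3 → ℝ} (hu : norm3 u = 1) (w : Fin 3 → ℝ) :
    (1 - cosAngle u w ^ 2) * norm3 w ^ 2 = norm3 (tilde3 u w) ^ 2 := by
  rw [norm3_tilde3_sq hu, ← cosAngle_mul_norm3 u w]; ring

theorem norm3_tilde3_sq_le {u : Fin 3 → ℝ} (hu : norm3 u = 1) (v : Fin 3 → ℝ) :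
    norm3 (tilde3 u v) ^ 2 ≤ norm3 v ^ 2 := by
  rw [norm3_tilde3_sq hu]; nlinarith [sq_nonneg (dot3 v u)]

section Operators

variable {K : Type*} [NormedAddCommGroup K] [InnerProductSpace ℂ K]

theorem sdotC_zero (S : Fin 3 → K →L[ℂ] K) : sdotC 0 S = 0 := by simp [sdotC]

theorem sdotC_smul (r : ℝ) (a : Fin 3 → ℝ) (S : Fin 3 → K →L[ℂ] K) :
    sdotC (r • a) S = (r : ℂ) • sdotC a S := by
  simp only [sdotC, Pi.smul_apply, smul_eq_mul, Complex.ofReal_mul, Finset.smul_sum, smul_smul]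

theorem NormedSpace.exp_add_smul_one {A : Type*} [NormedRing A] [NormedAlgebra ℂ A]
    [CompleteSpace A] (a : A) (c : ℂ) : exp (a + c • 1) = Complex.exp c • exp a := by
  have hball : ∀ b : A, b ∈ Metric.eball 0 (expSeries ℂ A).radius := fun b ↦ by
    simp [expSeries_radius_eq_top]
  rw [exp_add_of_commute_of_mem_ball ((Commute.one_right a).smul_right c) (hball _) (hball _),
    ← Algebra.algebraMap_eq_smul_one, ← algebraMap_exp_comm, Complex.exp_eq_exp_ℂ,
    Algebra.algebraMap_eq_smul_one, mul_smul_comm, mul_one]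

/-- `⟨Ω, e^{i Σ_x w_x·S_x} Ω⟩` is that of the product of spin-`m/2` coherent states along `u`. -/
def HasCoherentCharFun (m : ℕ) (S : L → Fin 3 → K →L[ℂ] K) (u : L → Fin 3 → ℝ) (Ω : K) :
    Prop :=
  ∀ w : L → Fin 3 → ℝ, Summable (fun x => norm3 (w x)) →
    (inner ℂ Ω ((NormedSpace.exp (Complex.I • ∑' x, sdotC (w x) (S x))) Ω) : ℂ)
      = ∏' x, (Complex.cos (norm3 (w x) / 2)
          + Complex.I * ((dot3 (w x) (u x) : ℝ) / norm3 (w x))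
            * Complex.sin (norm3 (w x) / 2)) ^ m

namespace HasCoherentCharFun

open Complex NormedSpace

variable {m : ℕ} {S : L → Fin 3 → K →L[ℂ] K} {u : L → Fin 3 → ℝ} {Ω : K}

theorem inner_exp_finset_sum (h : HasCoherentCharFun m S u Ω) (E : Finset L)
    (w : L → Fin 3 → ℝ) :
    inner ℂ Ω (exp (I • ∑ x ∈ E, sdotC (w x) (S x)) Ω)
      = ∏ x ∈ E, ((Real.cos (norm3 (w x) / 2) : ℂ)
          + I * cosAngle (u x) (w x) * Real.sin (norm3 (w x) / 2)) ^ m := by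
  classical
  set w' : L → Fin 3 → ℝ := fun x ↦ if x ∈ E then w x else 0
  have hw'E : ∀ x ∈ E, w' x = w x := fun x hx ↦ if_pos hx
  have hw' : ∀ x ∉ E, w' x = 0 := fun x hx ↦ if_neg hx
  have hchar := h w' (summable_of_ne_finset_zero fun x hx ↦ by rw [hw' x hx, norm3_zero])
  rw [tsum_eq_sum fun x hx ↦ by rw [hw' x hx, sdotC_zero],
    tprod_eq_prod fun x hx ↦ by simp [hw' x hx, norm3_zero]] at hchar
  rw [Finset.sum_congr rfl fun x hx ↦ by rw [hw'E x hx]] at hchar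
  rw [hchar]
  refine Finset.prod_congr rfl fun x hx ↦ ?_
  rw [hw'E x hx, cosAngle]
  push_cast
  rfl

theorem inner_exp_fluc_finset [CompleteSpace K] (h : HasCoherentCharFun m S u Ω) {J ε : ℝ}
    (hJ : 2 * J = m) (hε : 0 < ε) (v : L → Fin 3 → ℝ) (E : Finset L) :
    inner ℂ Ω (exp ((I * ε) •
        ∑ x ∈ E, (sdotC (v x) (S x) - ((J * dot3 (v x) (u x) : ℝ) : ℂ) • (1 : K →L[ℂ] K))) Ω)
      = ∏ x ∈ E, coherentFactor (cosAngle (u x) (v x)) (ε * norm3 (v x) / 2) ^ m := by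
  have hop : (I * ε) • ∑ x ∈ E, (sdotC (v x) (S x) - ((J * dot3 (v x) (u x) : ℝ) : ℂ) • 1)
      = I • ∑ x ∈ E, sdotC (ε • v x) (S x)
        + (-(I * (ε * ∑ x ∈ E, J * dot3 (v x) (u x) : ℝ))) • (1 : K →L[ℂ] K) := by
    simp only [sdotC_smul, ← Finset.smul_sum, smul_smul]
    rw [Finset.sum_sub_distrib, ← Finset.sum_smul, smul_sub, smul_smul, sub_eq_add_neg, ← neg_smul]
    congr 3
    push_cast
    ring
  -- the centring term `J v·u` of each site supplies the phase of its `coherentFactor`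
  have hsite : ∀ x, coherentFactor (cosAngle (u x) (v x)) (ε * norm3 (v x) / 2) ^ m
      = Complex.exp (-(I * (ε * (J * dot3 (v x) (u x)) : ℝ)))
        * ((Real.cos (norm3 (ε • v x) / 2) : ℂ)
          + I * cosAngle (u x) (ε • v x) * Real.sin (norm3 (ε • v x) / 2)) ^ m := fun x ↦ by
    rw [coherentFactor.pow_eq, norm3_smul, abs_of_pos hε, cosAngle_smul _ hε, ← hJ,
      ← cosAngle_mul_norm3 (u x) (v x)]
    push_cast
    ring_nf
  rw [hop, exp_add_smul_one, smul_apply, inner_smul_right,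
    h.inner_exp_finset_sum, Finset.prod_congr rfl fun x _ ↦ hsite x, Finset.prod_mul_distrib,
    ← Complex.exp_sum]
  push_cast
  rw [Finset.mul_sum, Finset.mul_sum, ← Finset.sum_neg_distrib]

end HasCoherentCharFun

theorem tendsto_inner_exp_smul_finset_sum [CompleteSpace K] {f : L → K →L[ℂ] K} {T : K →L[ℂ] K}
    (hf : HasSum f T) (z : ℂ) (Ω : K) :
    Tendsto (fun E : Finset L ↦ inner ℂ Ω (NormedSpace.exp (z • ∑ x ∈ E, f x) Ω))
      atTop (𝓝 (inner ℂ Ω (NormedSpace.exp (z • T) Ω))) := by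
  have hexp : Continuous (NormedSpace.exp : (K →L[ℂ] K) → K →L[ℂ] K) := by
    rw [← continuousOn_univ, ← Metric.eball_top_eq_univ 0,
      ← NormedSpace.expSeries_radius_eq_top ℂ (K →L[ℂ] K)]
    exact NormedSpace.continuousOn_exp
  have hcont : Continuous fun A : K →L[ℂ] K ↦ inner ℂ Ω (NormedSpace.exp (z • A) Ω) :=
    continuous_const.inner ((ContinuousLinearMap.apply ℂ K Ω).continuous.comp
      (hexp.comp (continuous_const_smul z)))
  exact (hcont.tendsto T).comp hf

end Operators

theorem norm_coherentFactor_pow_sub_exp_le {u : Fin 3 → ℝ} (hu : norm3 u = 1) {m : ℕ} {J : ℝ}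
    (hJ : 2 * J = m) (hJ0 : 0 < J) (v : Fin 3 → ℝ) :
    ‖coherentFactor (cosAngle u v) (√(2 / J) * norm3 v / 2) ^ m
        - (Real.exp (-(norm3 (tilde3 u v) ^ 2 / 2)) : ℂ)‖ ≤ √2 * norm3 v ^ 3 / √J := by
  set c := cosAngle u v
  set t := √(2 / J) * norm3 v / 2
  have hc : |c| ≤ 1 := abs_cosAngle_le_one hu v
  have hc2 : c ^ 2 ≤ 1 := by rw [← sq_abs]; nlinarith [abs_nonneg c]
  have ht : 0 ≤ t := by have := norm3_nonneg v; positivity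
  have hε : √(2 / J) = √2 / √J := Real.sqrt_div (by norm_num) J
  have h2 : √2 ^ 2 = 2 := Real.sq_sqrt (by norm_num)
  have hJ2 : √J ^ 2 = J := Real.sq_sqrt hJ0.le
  have hgauss : (Real.exp (-(norm3 (tilde3 u v) ^ 2 / 2)) : ℂ)
      = (Real.exp (-((1 - c ^ 2) * t ^ 2 / 2)) : ℂ) ^ m := by
    rw [← Complex.ofReal_pow, ← Real.exp_nat_mul, ← one_sub_cosAngle_sq_mul hu, ← hJ]
    congr 2
    simp only [t, hε]
    field_simp
    rw [hJ2, h2]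
    ring
  rw [hgauss]
  calc _ ≤ m * ‖coherentFactor c t - Real.exp (-((1 - c ^ 2) * t ^ 2 / 2))‖ :=
        norm_pow_sub_pow_le (coherentFactor.norm_le_one hc t)
          (norm_ofReal_exp_neg_le_one (by nlinarith [sq_nonneg t])) m
    _ ≤ m * (2 * t ^ 3) := by gcongr; exact coherentFactor.norm_sub_gaussian_le hc ht
    _ = √2 * norm3 v ^ 3 / √J := by
        simp only [t, hε, ← hJ]
        field_simp
        rw [hJ2, h2]
        ring

theorem norm_prod_coherentFactor_pow_sub_prod_exp_le {u v : L → Fin 3 → ℝ}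
    (hu : ∀ x, norm3 (u x) = 1) {m : ℕ} {J : ℝ} (hJ : 2 * J = m) (hJ0 : 0 < J)
    (hv : Summable fun x ↦ norm3 (v x) ^ 2) (E : Finset L) :
    ‖∏ x ∈ E, coherentFactor (cosAngle (u x) (v x)) (√(2 / J) * norm3 (v x) / 2) ^ m
        - ∏ x ∈ E, (Real.exp (-(norm3 (tilde3 (u x) (v x)) ^ 2 / 2)) : ℂ)‖
      ≤ √2 * √(∑' x, norm3 (v x) ^ 2) ^ 3 / √J := by
  calc _ ≤ ∑ x ∈ E, √2 * norm3 (v x) ^ 3 / √J :=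
        (Finset.norm_prod_sub_prod_le E
          (fun x _ ↦ by
            rw [norm_pow]
            exact pow_le_one₀ (norm_nonneg _)
              (coherentFactor.norm_le_one (abs_cosAngle_le_one (hu x) _) _))
          (fun x _ ↦ norm_ofReal_exp_neg_le_one (by positivity))).trans
        (Finset.sum_le_sum fun x _ ↦ norm_coherentFactor_pow_sub_exp_le (hu x) hJ hJ0 (v x))
    _ = √2 * (∑ x ∈ E, norm3 (v x) ^ 3) / √J := by rw [Finset.mul_sum, Finset.sum_div]
    _ ≤ _ := by gcongr; exact sum_pow_three_le_sqrt_tsum_sq_pow_three hv E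

theorem tendsto_prod_exp_neg_half {a : L → ℝ} (ha : Summable a) :
    Tendsto (fun E : Finset L ↦ ∏ x ∈ E, (Real.exp (-(a x / 2)) : ℂ)) atTop
      (𝓝 (Complex.exp (-(1 / 2 : ℂ) * ((∑' x, a x : ℝ) : ℂ)))) := by
  have h : Tendsto (fun E : Finset L ↦ ∏ x ∈ E, Real.exp (-(a x / 2))) atTop
      (𝓝 (Real.exp (-((∑' x, a x) / 2)))) := (ha.hasSum.div_const 2).neg.rexp
  have hlim : Complex.exp (-(1 / 2 : ℂ) * ((∑' x, a x : ℝ) : ℂ))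
      = (Real.exp (-((∑' x, a x) / 2)) : ℂ) := by
    rw [Complex.ofReal_exp]; push_cast; ring_nf
  rw [hlim]
  simpa only [Function.comp_def, Complex.ofReal_prod] using
    (Complex.continuous_ofReal.tendsto _).comp h

theorem stmt2_general
    (mJ : ℕ) (hmJ : 0 < mJ) (J : ℝ) (hJ : 2 * J = mJ)
    (S : L → Fin 3 → H →L[ℂ] H)
    (u : L → Fin 3 → ℝ) (hu : ∀ x, norm3 (u x) = 1)
    (Ω : H)
    (hchar : ∀ w : L → Fin 3 → ℝ, Summable (fun x => norm3 (w x)) →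
      (inner ℂ Ω ((NormedSpace.exp (Complex.I • ∑' x, sdotC (w x) (S x))) Ω) : ℂ)
        = ∏' x, (Complex.cos (norm3 (w x) / 2)
            + Complex.I * ((dot3 (w x) (u x) : ℝ) / norm3 (w x))
              * Complex.sin (norm3 (w x) / 2)) ^ mJ)
    (v : L → Fin 3 → ℝ) (hv2 : Summable fun x => norm3 (v x) ^ 2)
    (hFsum : Summable fun x =>
      sdotC (v x) (S x) - ((J * dot3 (v x) (u x) : ℝ) : ℂ) • (1 : H →L[ℂ] H)) :
    ‖(inner ℂ Ω ((NormedSpace.exp (Complex.I • flucOp J S u v)) Ω) : ℂ)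
          - Complex.exp (-(1 / 2 : ℂ) * ((∑' x, norm3 (tilde3 (u x) (v x)) ^ 2 : ℝ) : ℂ))‖
      ≤ (1 / Real.sqrt J) *
          Real.exp (Real.sqrt 2 * Real.sqrt (∑' x, norm3 (v x) ^ 2)
            + Real.sqrt 2 * Real.exp (Real.sqrt 2 * Real.sqrt (∑' x, norm3 (v x) ^ 2))) := by
  have hJ0 : 0 < J := by have : (0 : ℝ) < mJ := mod_cast hmJ; linarith
  have hfluc := tendsto_inner_exp_smul_finset_sum hFsum.hasSum (Complex.I * √(2 / J)) Ω
  rw [← smul_smul, ← flucOp] at hfluc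
  have hgauss := tendsto_prod_exp_neg_half (a := fun x ↦ norm3 (tilde3 (u x) (v x)) ^ 2)
    (hv2.of_nonneg_of_le (fun _ ↦ sq_nonneg _) fun x ↦ norm3_tilde3_sq_le (hu x) (v x))
  refine le_of_tendsto (hfluc.sub hgauss).norm (Eventually.of_forall fun E ↦ ?_)
  rw [HasCoherentCharFun.inner_exp_fluc_finset hchar hJ (by positivity) v E]
  calc _ ≤ √2 * √(∑' x, norm3 (v x) ^ 2) ^ 3 / √J :=
        norm_prod_coherentFactor_pow_sub_prod_exp_le hu hJ hJ0 hv2 E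
    _ ≤ _ := by
        rw [one_div_mul_eq_div]
        gcongr
        exact sqrt_two_mul_pow_three_le_exp (Real.sqrt_nonneg _)

/-- One-variable central limit bound for the fluctuation operator `F_J(v)` in a
product of spin-`J` coherent states:
`|ω(e^{iF_J(v)}) − e^{−(1/2)|ṽ|₂²}| ≤ J^{−1/2} exp(√2|v|₂ + √2 exp(√2|v|₂))`. -/
theorem stmt2
    (mJ : ℕ) (hmJ : 0 < mJ) (J : ℝ) (hJ : 2 * J = mJ)
    (S : L → Fin 3 → H →L[ℂ] H) (hsa : ∀ x i, IsSelfAdjoint (S x i))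
    (hSnorm : ∀ (x : L) (a : Fin 3 → ℝ), ‖sdotC a (S x)‖ = J * norm3 a)
    (u : L → Fin 3 → ℝ) (hu : ∀ x, norm3 (u x) = 1)
    (Ω : H) (hΩ : ‖Ω‖ = 1)
    (hchar : ∀ w : L → Fin 3 → ℝ, Summable (fun x => norm3 (w x)) →
      (inner ℂ Ω ((NormedSpace.exp (Complex.I • ∑' x, sdotC (w x) (S x))) Ω) : ℂ)
        = ∏' x, (Complex.cos (norm3 (w x) / 2)
            + Complex.I * ((dot3 (w x) (u x) : ℝ) / norm3 (w x))
              * Complex.sin (norm3 (w x) / 2)) ^ mJ)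
    (v : L → Fin 3 → ℝ) (hv2 : Summable fun x => norm3 (v x) ^ 2)
    (hFsum : Summable fun x =>
      sdotC (v x) (S x) - ((J * dot3 (v x) (u x) : ℝ) : ℂ) • (1 : H →L[ℂ] H)) :
    ‖(inner ℂ Ω ((NormedSpace.exp (Complex.I • flucOp J S u v)) Ω) : ℂ)
          - Complex.exp (-(1 / 2 : ℂ) * ((∑' x, norm3 (tilde3 (u x) (v x)) ^ 2 : ℝ) : ℂ))‖
      ≤ (1 / Real.sqrt J) *
          Real.exp (Real.sqrt 2 * Real.sqrt (∑' x, norm3 (v x) ^ 2)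
            + Real.sqrt 2 * Real.exp (Real.sqrt 2 * Real.sqrt (∑' x, norm3 (v x) ^ 2))) :=
  stmt2_general mJ hmJ J hJ S u hu Ω hchar v hv2 hFsum
end

section
/- Commutator exponential estimate: in any C*-algebra, for A self-adjoint and C arbitrary, ‖[e^{iA}, C]‖ ≤ ‖[A, C]‖. -/
/-! Write `X = iA`, which is skew-adjoint, so every `exp (t • X)` with `t` real is unitary.
The path `t ↦ exp (t • X) * C * exp (-t • X)` runs from `C` to `exp X * C * exp (-X)` with
derivative `exp (t • X) * [X, C] * exp (-t • X)`, of norm `‖[X, C]‖`; the mean value inequality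
bounds the endpoint difference by `‖[X, C]‖ = ‖[A, C]‖`, and
`[exp X, C] = (exp X * C * exp (-X) - C) * exp X` has the same norm. -/

open NormedSpace

section RealBanachAlgebra

variable {𝔄 : Type*} [NormedRing 𝔄] [NormedAlgebra ℝ 𝔄] [CompleteSpace 𝔄]

theorem hasDerivAt_exp_smul_mul_mul_exp_neg_smul (X C : 𝔄) (t : ℝ) :
    HasDerivAt (fun s : ℝ => exp (s • X) * C * exp (s • -X))
      (exp (t • X) * (X * C - C * X) * exp (t • -X)) t := by
  let _ : NormedAlgebra ℚ 𝔄 := NormedAlgebra.restrictScalars ℚ ℝ 𝔄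
  have hX_comm : Commute X (exp (t • -X)) :=
    (((Commute.refl X).neg_right).smul_right t).exp_right
  refine (((hasDerivAt_exp_smul_const X t).mul_const C).mul
    (hasDerivAt_exp_smul_const (-X) t)).congr_deriv ?_
  rw [← hX_comm.neg_left.eq]
  noncomm_ring

end RealBanachAlgebra

section CStarAlgebra

variable {𝔄 : Type*} [NormedRing 𝔄] [StarRing 𝔄] [CStarRing 𝔄] [NormedAlgebra ℝ 𝔄]
  [CompleteSpace 𝔄] [StarModule ℝ 𝔄]

theorem exp_smul_mem_unitary_of_mem_skewAdjoint {X : 𝔄} (hX : X ∈ skewAdjoint 𝔄) (t : ℝ) :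
    exp (t • X) ∈ unitary 𝔄 :=
  letI : NormedAlgebra ℚ 𝔄 := NormedAlgebra.restrictScalars ℚ ℝ 𝔄
  exp_mem_unitary_of_mem_skewAdjoint (skewAdjoint.smul_mem t hX)

theorem norm_exp_mul_mul_exp_neg_sub_le {X : 𝔄} (hX : X ∈ skewAdjoint 𝔄) (C : 𝔄) :
    ‖exp X * C * exp (-X) - C‖ ≤ ‖X * C - C * X‖ := by
  have hunitary := exp_smul_mem_unitary_of_mem_skewAdjoint hX
  have hunitary_neg := exp_smul_mem_unitary_of_mem_skewAdjoint (neg_mem hX)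
  have hderiv_le (t : ℝ) :
      ‖exp (t • X) * (X * C - C * X) * exp (t • -X)‖ ≤ ‖X * C - C * X‖ := by
    rw [CStarRing.norm_mul_mem_unitary _ (hunitary_neg t),
      CStarRing.norm_mem_unitary_mul _ (hunitary t)]
  simpa using convex_univ.norm_image_sub_le_of_norm_hasDerivWithin_le
    (fun t _ => (hasDerivAt_exp_smul_mul_mul_exp_neg_smul X C t).hasDerivWithinAt)
    (fun t _ => hderiv_le t) (Set.mem_univ 0) (Set.mem_univ 1)

theorem norm_exp_mul_sub_mul_exp_le {X : 𝔄} (hX : X ∈ skewAdjoint 𝔄) (C : 𝔄) :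
    ‖exp X * C - C * exp X‖ ≤ ‖X * C - C * X‖ := by
  let _ : NormedAlgebra ℚ 𝔄 := NormedAlgebra.restrictScalars ℚ ℝ 𝔄
  have hunitary : exp X ∈ unitary 𝔄 := exp_mem_unitary_of_mem_skewAdjoint hX
  have hconj : exp X * C - C * exp X = (exp X * C * exp (-X) - C) * exp X := by
    rw [sub_mul, mul_assoc _ (exp (-X)), ← exp_add_of_commute (Commute.refl X).neg_left,
      neg_add_cancel, exp_zero, mul_one]
  rw [hconj, CStarRing.norm_mul_mem_unitary _ hunitary]
  exact norm_exp_mul_mul_exp_neg_sub_le hX C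

end CStarAlgebra

/-- Commutator exponential estimate: in any C*-algebra, for `A` self-adjoint and `C`
arbitrary, `‖[e^{iA}, C]‖ ≤ ‖[A, C]‖`. -/
theorem stmt5 {𝔄 : Type*} [NormedRing 𝔄] [StarRing 𝔄] [CStarRing 𝔄]
    [NormedAlgebra ℂ 𝔄] [CompleteSpace 𝔄] [StarModule ℂ 𝔄]
    (A C : 𝔄) (hA : IsSelfAdjoint A) :
    ‖NormedSpace.exp (Complex.I • A) * C - C * NormedSpace.exp (Complex.I • A)‖
      ≤ ‖A * C - C * A‖ := by
  have hcomm : Complex.I • A * C - C * (Complex.I • A) = Complex.I • (A * C - C * A) := by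
    rw [smul_mul_assoc, mul_smul_comm, smul_sub]
  calc _ ≤ ‖Complex.I • A * C - C * (Complex.I • A)‖ :=
        norm_exp_mul_sub_mul_exp_le (hA.smul_mem_skewAdjoint Complex.conj_I) C
    _ = ‖A * C - C * A‖ := by rw [hcomm, norm_smul, Complex.norm_I, one_mul]
end

section
/- Parameter-derivative of a perturbed exponential: in a unital Banach algebra, for elements A, B, the map t ↦ e^{i(tA+B)} is differentiable with derivative (d/dt) e^{i(tA+B)} = i ∫₀¹ e^{is(tA+B)} A e^{i(1−s)(tA+B)} ds. -/
/-!
Duhamel's formula `e^Y - e^X = ∫₀¹ e^{sY} (Y - X) e^{(1-s)X} ds` follows by differentiating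
`s ↦ e^{sY} e^{(1-s)X}`. Along an affine path `Z u = u • C + X` it writes the difference quotient
of `u ↦ e^{Z u}` at `t` as `∫₀¹ e^{s Z u} C e^{(1-s) Z t} ds`, which is continuous in `u`; its value
at `u = t` is the derivative. The theorem is the case `C = iA`, `X = iB`.
-/

open NormedSpace

section RealBanachAlgebra

variable {𝔸 : Type*} [NormedRing 𝔸] [NormedAlgebra ℝ 𝔸] [CompleteSpace 𝔸]

@[fun_prop]
theorem continuous_exp_of_real : Continuous (exp : 𝔸 → 𝔸) :=
  continuous_iff_continuousAt.2 fun x => (exp_analytic (𝕂 := ℝ) x).continuousAt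

theorem hasDerivAt_exp_one_sub_smul (X : 𝔸) (s : ℝ) :
    HasDerivAt (fun s : ℝ => exp ((1 - s) • X)) (-(X * exp ((1 - s) • X))) s := by
  have := (hasDerivAt_exp_smul_const' (𝕂 := ℝ) X (1 - s)).scomp s ((hasDerivAt_id s).const_sub 1)
  simpa [Function.comp_def] using this

theorem exp_sub_exp_eq_integral (X Y : 𝔸) :
    exp Y - exp X = ∫ s in (0:ℝ)..1, exp (s • Y) * (Y - X) * exp ((1 - s) • X) := by
  have hderiv : ∀ s ∈ Set.uIcc (0:ℝ) 1,
      HasDerivAt (fun s : ℝ => exp (s • Y) * exp ((1 - s) • X))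
        (exp (s • Y) * (Y - X) * exp ((1 - s) • X)) s := by
    intro s _
    refine ((hasDerivAt_exp_smul_const' (𝕂 := ℝ) Y s).mul
      (hasDerivAt_exp_one_sub_smul X s)).congr_deriv ?_
    rw [((Commute.refl Y).smul_right s).exp_right.eq]
    noncomm_ring
  have hcont : Continuous fun s : ℝ => exp (s • Y) * (Y - X) * exp ((1 - s) • X) := by fun_prop
  rw [intervalIntegral.integral_eq_sub_of_hasDerivAt hderiv (hcont.intervalIntegrable 0 1)]
  simp

theorem hasDerivAt_exp_smul_add (C X : 𝔸) (t : ℝ) :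
    HasDerivAt (fun u : ℝ => exp (u • C + X))
      (∫ s in (0:ℝ)..1, exp (s • (t • C + X)) * C * exp ((1 - s) • (t • C + X))) t := by
  set Φ : ℝ → 𝔸 := fun u =>
    ∫ s in (0:ℝ)..1, exp (s • (u • C + X)) * C * exp ((1 - s) • (t • C + X))
  have hslope : ∀ u ≠ t, slope (fun u : ℝ => exp (u • C + X)) t u = Φ u := by
    intro u hu
    have hdiff : (u • C + X) - (t • C + X) = (u - t) • C := by module
    rw [slope_def_module, exp_sub_exp_eq_integral, hdiff]
    simp only [smul_mul_assoc, mul_smul_comm, intervalIntegral.integral_smul, smul_smul]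
    rw [inv_mul_cancel₀ (sub_ne_zero.2 hu), one_smul]
  have hΦ : Continuous Φ :=
    intervalIntegral.continuous_parametric_intervalIntegral_of_continuous' (by fun_prop) 0 1
  rw [hasDerivAt_iff_tendsto_slope]
  refine ((hΦ.tendsto t).mono_left nhdsWithin_le_nhds).congr' ?_
  filter_upwards [self_mem_nhdsWithin] with u hu
  exact (hslope u hu).symm

end RealBanachAlgebra

/-- Parameter-derivative of a perturbed exponential in a unital Banach algebra:
`(d/dt) e^{i(tA+B)} = i ∫₀¹ e^{is(tA+B)} A e^{i(1−s)(tA+B)} ds`. -/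
theorem stmt8 {𝔄 : Type*} [NormedRing 𝔄] [NormedAlgebra ℂ 𝔄] [CompleteSpace 𝔄]
    (A B : 𝔄) (t : ℝ) :
    HasDerivAt (fun t : ℝ => NormedSpace.exp (Complex.I • ((t : ℂ) • A + B)))
      (Complex.I •
        ∫ s in (0:ℝ)..1,
          NormedSpace.exp ((Complex.I * s) • ((t : ℂ) • A + B)) * A *
            NormedSpace.exp ((Complex.I * (1 - s)) • ((t : ℂ) • A + B))) t := by
  have hsmul : ∀ (r : ℝ) (Z : 𝔄), r • Complex.I • Z = (Complex.I * r) • Z := fun r Z => by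
    rw [← Complex.coe_smul, smul_smul, mul_comm]
  have hline : ∀ u : ℝ, u • Complex.I • A + Complex.I • B = Complex.I • ((u : ℂ) • A + B) :=
    fun u => by rw [hsmul, smul_add, smul_smul]
  have key := hasDerivAt_exp_smul_add (Complex.I • A) (Complex.I • B) t
  simp only [hline] at key
  simp only [hsmul] at key
  rw [← intervalIntegral.integral_smul]
  refine key.congr_deriv (intervalIntegral.integral_congr fun s _ => ?_)
  push_cast
  rw [mul_smul_comm, smul_mul_assoc]
end

section
/- Uniform bound for Dyson-represented spin fluctuation operators: for n ∈ ℕ, ψ_n in the n-particle subspace 𝒟_n, v ∈ ℓ¹₃(L), and J ∈ (1/2)ℕ₀ with 2J > n, ‖F_J(v) ψ_n‖ ≤ 4 |v|₁ (n+1)^{1/2} ‖ψ_n‖, where F_J(v) = P_J { Σ_x ṽ⁺_x a*_x g_J(x)^{1/2} + ṽ⁻_x g_J(x)^{1/2} a_x − (2/J)^{1/2} ṽ³_x a*_x a_x } P_J. -/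
/-- Total particle number of an occupation-number configuration. -/
def deg {L : Type*} (m : L →₀ ℕ) : ℕ := m.sum fun _ k => k

/-- The algebraic `n`-particle subspace: the span of the occupation-number basis
vectors with total particle number `n`. -/
def nSector {L : Type*} {F : Type*} [NormedAddCommGroup F] [InnerProductSpace ℂ F]
    (e : (L →₀ ℕ) → F) (n : ℕ) : Submodule ℂ F :=
  Submodule.span ℂ (e '' {m | deg m = n})

/-- Dyson's function `g_J(k) = max(1 − k/(2J), 0)`, written in terms of `2J`. -/
noncomputable def gDyson (twoJ : ℝ) (k : ℕ) : ℝ := max (1 - k / twoJ) 0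

/-- The `ℓ¹`-norm of an `ℝ³`-valued sequence given by its rotated components
(transverse component `vt x = ṽ¹_x + iṽ²_x` and third component `v3 x = ṽ³_x`). -/
noncomputable def l1norm {L : Type*} (vt : L → ℂ) (v3 : L → ℝ) : ℝ :=
  ∑' x, Real.sqrt (‖vt x‖ ^ 2 + v3 x ^ 2)

/-!
Expand `ψ = ∑ c_m e_m` in the occupation-number basis and fix a site `x`. The three pieces of
the `x`-summand of `F_J(v) ψ` are sums `∑ c_m a_m e_{f m}` with `f m = m + δ_x`, `m - δ_x` or `m`,
and `f` is injective where `a_m ≠ 0`; by orthonormality each has norm at most `sup |a_m| · ‖ψ‖`.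
Every `m` has at most `n < 2J` particles at `x` and `0 ≤ g_J ≤ 1`, so with
`|v_x| = (|ṽ⁺_x|² + (ṽ³_x)²)^(1/2)` the coefficients are bounded by `|v_x| √(n+1)`, `|v_x| √(n+1)`
and `√(2/J) m_x |ṽ³_x| ≤ 2 √m_x |v_x|`. Summing the site bound `4 |v_x| √(n+1) ‖ψ‖` over `x`
gives the claim.
-/

section Orthonormal

variable {𝕜 E ι κ : Type*} [RCLike 𝕜] [NormedAddCommGroup E] [InnerProductSpace 𝕜 E]
  {v : κ → E}

theorem Orthonormal.norm_sum_smul_sq (hv : Orthonormal 𝕜 v) (s : Finset κ) (l : κ → 𝕜) :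
    ‖∑ i ∈ s, l i • v i‖ ^ 2 = ∑ i ∈ s, ‖l i‖ ^ 2 := by
  rw [@norm_sq_eq_re_inner 𝕜, hv.inner_sum, map_sum]
  refine Finset.sum_congr rfl fun i _ => ?_
  rw [RCLike.conj_mul]
  norm_cast

theorem Orthonormal.norm_sum_smul_comp_sq (hv : Orthonormal 𝕜 v) (s : Finset ι) (d : ι → 𝕜)
    {f : ι → κ} (hf : Set.InjOn f {i | d i ≠ 0}) :
    ‖∑ i ∈ s, d i • v (f i)‖ ^ 2 = ∑ i ∈ s, ‖d i‖ ^ 2 := by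
  classical
  set t := s.filter (d · ≠ 0)
  have ht : Orthonormal 𝕜 fun i : t => v (f i) :=
    hv.comp (f ∘ Subtype.val) fun i j h =>
      Subtype.ext (hf (Finset.mem_filter.1 i.2).2 (Finset.mem_filter.1 j.2).2 h)
  have hsum : ∑ i ∈ s, d i • v (f i) = ∑ i ∈ t.attach, d i • v (f i) := by
    rw [Finset.sum_attach t fun i => d i • v (f i)]
    exact (Finset.sum_filter_of_ne (p := (d · ≠ 0)) fun i _ h hd => h (by simp [hd])).symm
  have hnorm : ∑ i ∈ s, ‖d i‖ ^ 2 = ∑ i ∈ t.attach, ‖d i‖ ^ 2 := by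
    rw [Finset.sum_attach t fun i => ‖d i‖ ^ 2]
    exact (Finset.sum_filter_of_ne (p := (d · ≠ 0)) fun i _ h hd => h (by simp [hd])).symm
  rw [hsum, hnorm]
  exact ht.norm_sum_smul_sq t.attach (fun i => d i)

theorem Orthonormal.norm_sum_mul_smul_comp_le (hv : Orthonormal 𝕜 v) (s : Finset κ)
    (c a : κ → 𝕜) {f : κ → κ} (hf : Set.InjOn f {i | a i ≠ 0}) {B : ℝ} (hB : 0 ≤ B)
    (ha : ∀ i ∈ s, ‖a i‖ ≤ B) :
    ‖∑ i ∈ s, (c i * a i) • v (f i)‖ ≤ B * ‖∑ i ∈ s, c i • v i‖ := by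
  have hf' : Set.InjOn f {i | c i * a i ≠ 0} :=
    hf.mono fun i hi => right_ne_zero_of_mul hi
  refine (pow_le_pow_iff_left₀ (norm_nonneg _) (by positivity) two_ne_zero).mp ?_
  rw [hv.norm_sum_smul_comp_sq s _ hf', mul_pow, hv.norm_sum_smul_sq, Finset.mul_sum]
  refine Finset.sum_le_sum fun i hi => ?_
  rw [norm_mul, mul_pow, mul_comm]
  gcongr
  exact ha i hi

end Orthonormal

theorem apply_le_deg {L : Type*} (m : L →₀ ℕ) (x : L) : m x ≤ deg m :=
  Finsupp.le_degree x m

theorem gDyson_le_one {twoJ : ℝ} (h : 0 ≤ twoJ) (k : ℕ) : gDyson twoJ k ≤ 1 :=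
  max_le (sub_le_self _ (by positivity)) zero_le_one

theorem sqrt_mul_gDyson_le {twoJ a : ℝ} (h : 0 ≤ twoJ) (ha : 0 ≤ a) (k : ℕ) :
    Real.sqrt (a * gDyson twoJ k) ≤ Real.sqrt a :=
  Real.sqrt_le_sqrt (mul_le_of_le_one_right ha (gDyson_le_one h k))

theorem sqrt_four_div_mul_le {twoJ : ℝ} {k : ℕ} (hk : (k : ℝ) ≤ twoJ) :
    Real.sqrt (4 / twoJ) * k ≤ 2 * Real.sqrt k := by
  rcases Nat.eq_zero_or_pos k with rfl | hk0
  · simp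
  have htwoJ : 0 < twoJ := lt_of_lt_of_le (by exact_mod_cast hk0) hk
  rw [← Real.sqrt_sq (Nat.cast_nonneg k : (0 : ℝ) ≤ k), ← Real.sqrt_mul (by positivity),
    show (2 : ℝ) = Real.sqrt 4 by norm_num, ← Real.sqrt_mul (by norm_num),
    Real.sqrt_sq (by positivity)]
  refine Real.sqrt_le_sqrt ?_
  rw [div_mul_eq_mul_div, div_le_iff₀ htwoJ]
  nlinarith

section Dyson

variable {L F : Type*} [NormedAddCommGroup F] [InnerProductSpace ℂ F]

/-- The site-`x` summand of `F_J(v) (e m)`, with `twoJ = 2J` (so `4 / twoJ = 2 / J`). -/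
noncomputable def dysonTerm (e : (L →₀ ℕ) → F) (twoJ : ℝ) (vt : L → ℂ) (v3 : L → ℝ) (x : L)
    (m : L →₀ ℕ) : F :=
  (vt x * Real.sqrt ((m x + 1) * gDyson twoJ (m x))) • e (m + Finsupp.single x 1)
    + (starRingEnd ℂ (vt x) * Real.sqrt (m x * gDyson twoJ (m x - 1))) •
        e (m - Finsupp.single x 1)
    + (-((Real.sqrt (4 / twoJ) * v3 x * m x : ℝ) : ℂ)) • e m

theorem norm_sum_smul_dysonTerm_le {e : (L →₀ ℕ) → F} (he : Orthonormal ℂ e) {twoJ : ℝ}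
    (vt : L → ℂ) (v3 : L → ℝ) {n : ℕ} (hn : (n : ℝ) < twoJ) (x : L) (s : Finset (L →₀ ℕ))
    (hs : ∀ m ∈ s, m x ≤ n) (c : (L →₀ ℕ) → ℂ) :
    ‖∑ m ∈ s, c m • dysonTerm e twoJ vt v3 x m‖ ≤
      4 * Real.sqrt (n + 1) * ‖∑ m ∈ s, c m • e m‖ * Real.sqrt (‖vt x‖ ^ 2 + v3 x ^ 2) := by
  set w := Real.sqrt (‖vt x‖ ^ 2 + v3 x ^ 2)
  set Q := Real.sqrt (n + 1)
  have htwoJ : 0 ≤ twoJ := (Nat.cast_nonneg n).trans hn.le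
  have hvt : ‖vt x‖ ≤ w := (le_abs_self _).trans (Real.abs_le_sqrt (by nlinarith))
  have hv3 : |v3 x| ≤ w := Real.abs_le_sqrt (by nlinarith)
  have hmn : ∀ m ∈ s, (m x : ℝ) ≤ n := fun m hm => by exact_mod_cast hs m hm
  have hQ : ∀ m ∈ s, Real.sqrt (m x + 1) ≤ Q := fun m hm =>
    Real.sqrt_le_sqrt (by linarith [hmn m hm])
  have hraise : ∀ m ∈ s, ‖vt x * Real.sqrt ((m x + 1) * gDyson twoJ (m x))‖ ≤ w * Q := by
    intro m hm
    rw [norm_mul, Complex.norm_real, Real.norm_of_nonneg (Real.sqrt_nonneg _)]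
    gcongr
    exact (sqrt_mul_gDyson_le htwoJ (by positivity) _).trans (hQ m hm)
  have hlower : ∀ m ∈ s,
      ‖starRingEnd ℂ (vt x) * Real.sqrt (m x * gDyson twoJ (m x - 1))‖ ≤ w * Q := by
    intro m hm
    rw [norm_mul, RCLike.norm_conj, Complex.norm_real, Real.norm_of_nonneg (Real.sqrt_nonneg _)]
    gcongr
    exact (sqrt_mul_gDyson_le htwoJ (by positivity) _).trans
      ((Real.sqrt_le_sqrt (by linarith)).trans (hQ m hm))
  have hnumber : ∀ m ∈ s, ‖-((Real.sqrt (4 / twoJ) * v3 x * m x : ℝ) : ℂ)‖ ≤ 2 * w * Q := by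
    intro m hm
    rw [norm_neg, Complex.norm_real, Real.norm_eq_abs, mul_right_comm, abs_mul,
      abs_of_nonneg (by positivity)]
    have hk : Real.sqrt (4 / twoJ) * m x ≤ 2 * Q :=
      (sqrt_four_div_mul_le (by linarith [hmn m hm])).trans <| mul_le_mul_of_nonneg_left
        ((Real.sqrt_le_sqrt (le_add_of_nonneg_right zero_le_one)).trans (hQ m hm)) zero_le_two
    calc Real.sqrt (4 / twoJ) * m x * |v3 x| ≤ 2 * Q * w := by gcongr
      _ = 2 * w * Q := by ring
  have hsplit : ∑ m ∈ s, c m • dysonTerm e twoJ vt v3 x m =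
      ∑ m ∈ s, (c m * (vt x * Real.sqrt ((m x + 1) * gDyson twoJ (m x)))) •
          e (m + Finsupp.single x 1)
        + ∑ m ∈ s, (c m * (starRingEnd ℂ (vt x) * Real.sqrt (m x * gDyson twoJ (m x - 1)))) •
          e (m - Finsupp.single x 1)
        + ∑ m ∈ s, (c m * -((Real.sqrt (4 / twoJ) * v3 x * m x : ℝ) : ℂ)) • e m := by
    simp only [dysonTerm, smul_add, smul_smul, Finset.sum_add_distrib]
  have hinj_lower : Set.InjOn (· - Finsupp.single x 1)
      {m | starRingEnd ℂ (vt x) * Real.sqrt (m x * gDyson twoJ (m x - 1)) ≠ 0} := by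
    have hpos : ∀ m : L →₀ ℕ,
        starRingEnd ℂ (vt x) * Real.sqrt (m x * gDyson twoJ (m x - 1)) ≠ 0 →
          Finsupp.single x 1 ≤ m := fun m hm => by
      rw [Finsupp.single_le_iff, Nat.one_le_iff_ne_zero]
      rintro h
      simp [h] at hm
    exact fun m hm m' hm' h => (tsub_left_inj (hpos m hm) (hpos m' hm')).mp h
  rw [hsplit]
  calc _ ≤ _ := norm_add₃_le
    _ ≤ w * Q * ‖∑ m ∈ s, c m • e m‖ + w * Q * ‖∑ m ∈ s, c m • e m‖
          + 2 * w * Q * ‖∑ m ∈ s, c m • e m‖ := by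
      gcongr
      · exact he.norm_sum_mul_smul_comp_le s c _ (add_left_injective _).injOn
          (by positivity) hraise
      · exact he.norm_sum_mul_smul_comp_le s c _ hinj_lower (by positivity) hlower
      · exact he.norm_sum_mul_smul_comp_le s c _ (f := id) (Set.injOn_id _) (by positivity)
          hnumber
    _ = 4 * Q * ‖∑ m ∈ s, c m • e m‖ * w := by ring

end Dyson

theorem LinearMap.hasSum_map_sum_smul {R M N ι β : Type*} [Semiring R] [AddCommMonoid M]
    [Module R M] [AddCommMonoid N] [Module R N] [TopologicalSpace N] [ContinuousAdd N]
    [ContinuousConstSMul R N] (T : M →ₗ[R] N) (s : Finset ι) (c : ι → R) (b : ι → M)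
    {t : β → ι → N} (ht : ∀ i ∈ s, HasSum (t · i) (T (b i))) :
    HasSum (fun x => ∑ i ∈ s, c i • t x i) (T (∑ i ∈ s, c i • b i)) := by
  simp only [map_sum, map_smul]
  exact hasSum_sum fun i hi => (ht i hi).const_smul (c i)

theorem stmt13_general {L : Type*} {F : Type*} [NormedAddCommGroup F] [InnerProductSpace ℂ F]
    [CompleteSpace F]
    -- the occupation-number orthonormal basis of Fock space
    (e : (L →₀ ℕ) → F) (he : Orthonormal ℂ e)
    -- spin magnitude `J ∈ (1/2)ℕ₀`
    (J : ℝ)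
    -- rotated components of `v ∈ ℓ¹₃(L)`
    (vt : L → ℂ) (v3 : L → ℝ)
    (hv1 : Summable fun x => Real.sqrt (‖vt x‖ ^ 2 + v3 x ^ 2))
    -- the Dyson spin-wave representation `F_J(v)` of the fluctuation operator
    (FJ : F →ₗ[ℂ] F)
    (hFJ : ∀ m : L →₀ ℕ, (∀ x, (m x : ℝ) ≤ 2 * J) →
      FJ (e m) = ∑' x : L,
          (((vt x) * Real.sqrt ((m x + 1) * gDyson (2 * J) (m x))) • e (m + Finsupp.single x 1)
            + ((starRingEnd ℂ) (vt x) * Real.sqrt ((m x) * gDyson (2 * J) (m x - 1))) •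
                e (m - Finsupp.single x 1)
            + (-((Real.sqrt (4 / (2 * J)) * v3 x * m x : ℝ) : ℂ)) • e m))
    (n : ℕ) (hn : (n : ℝ) < 2 * J) (ψ : F) (hψ : ψ ∈ nSector e n) :
    ‖FJ ψ‖ ≤ 4 * l1norm vt v3 * Real.sqrt (n + 1) * ‖ψ‖ := by
  obtain ⟨c, hc, rfl⟩ := (Finsupp.mem_span_image_iff_linearCombination ℂ).mp hψ
  rw [Finsupp.linearCombination_apply, Finsupp.sum]
  have hsite : ∀ m ∈ c.support, ∀ x, m x ≤ n := fun m hm x =>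
    (apply_le_deg m x).trans_eq (hc hm)
  have hterm : ∀ m ∈ c.support, HasSum (dysonTerm e (2 * J) vt v3 · m) (FJ (e m)) := by
    intro m hm
    have hsummable : Summable (dysonTerm e (2 * J) vt v3 · m) :=
      (hv1.mul_left (4 * Real.sqrt (n + 1))).of_norm_bounded fun x => by
        simpa [he.norm_eq_one] using
          norm_sum_smul_dysonTerm_le he vt v3 hn x {m} (by simpa using hsite m hm x) 1
    rw [hFJ m fun x => (Nat.cast_le.mpr (hsite m hm x)).trans hn.le]
    exact hsummable.hasSum
  refine ((FJ.hasSum_map_sum_smul _ c e hterm).norm_le_of_bounded (hv1.hasSum.mul_left _)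
    fun x => norm_sum_smul_dysonTerm_le he vt v3 hn x _ (fun m hm => hsite m hm x) c).trans_eq ?_
  rw [l1norm]
  ring

/-- Uniform bound for Dyson-represented spin fluctuation operators: for `ψ` in the
`n`-particle subspace, `v ∈ ℓ¹₃(L)`, and `2J > n`,
`‖F_J(v)ψ‖ ≤ 4|v|₁ (n+1)^(1/2) ‖ψ‖`. -/
theorem stmt13 {L : Type*} {F : Type*} [NormedAddCommGroup F] [InnerProductSpace ℂ F]
    [CompleteSpace F]
    -- the occupation-number orthonormal basis of Fock space
    (e : (L →₀ ℕ) → F) (he : Orthonormal ℂ e)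
    -- spin magnitude `J ∈ (1/2)ℕ₀`
    (mJ : ℕ) (hmJ : 0 < mJ) (J : ℝ) (hJ : 2 * J = mJ)
    -- rotated components of `v ∈ ℓ¹₃(L)`
    (vt : L → ℂ) (v3 : L → ℝ)
    (hv1 : Summable fun x => Real.sqrt (‖vt x‖ ^ 2 + v3 x ^ 2))
    -- the Dyson spin-wave representation `F_J(v)` of the fluctuation operator
    (FJ : F →ₗ[ℂ] F)
    (hFJ0 : ∀ m : L →₀ ℕ, (∃ x, (2 * J : ℝ) < m x) → FJ (e m) = 0)
    (hFJ : ∀ m : L →₀ ℕ, (∀ x, (m x : ℝ) ≤ 2 * J) →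
      FJ (e m) = ∑' x : L,
          (((vt x) * Real.sqrt ((m x + 1) * gDyson (2 * J) (m x))) • e (m + Finsupp.single x 1)
            + ((starRingEnd ℂ) (vt x) * Real.sqrt ((m x) * gDyson (2 * J) (m x - 1))) •
                e (m - Finsupp.single x 1)
            + (-((Real.sqrt (4 / (2 * J)) * v3 x * m x : ℝ) : ℂ)) • e m))
    (n : ℕ) (hn : (n : ℝ) < 2 * J) (ψ : F) (hψ : ψ ∈ nSector e n) :
    ‖FJ ψ‖ ≤ 4 * l1norm vt v3 * Real.sqrt (n + 1) * ‖ψ‖ :=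
  stmt13_general e he J vt v3 hv1 FJ hFJ n hn ψ hψ
end
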